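/- arXiv:2011.10083 — 5 statements merged into one kernel-verified Lean document; each statement's English description precedes it below -/
import Mathlib

section
/- Let (X,·) be a finite indecomposable cycle set whose permutation group 𝒢(X) is cyclic. Then for every x ∈ X the cyclic subgroup generated by σ_x equals 𝒢(X). -/
structure CycleSet (X : Type*) where
  mul : X → X → X
  mul_bijective : ∀ x, Function.Bijective (mul x)
  cycloid : ∀ x y z, mul (mul x y) (mul x z) = mul (mul y x) (mul y z)
  nondeg : Function.Bijective (fun x => mul x x)

namespace CycleSet

variable {X : Type*}

/-- The left multiplication `σ_x` as a permutation of `X`. -/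
noncomputable def sigma (C : CycleSet X) (x : X) : Equiv.Perm X :=
  Equiv.ofBijective (C.mul x) (C.mul_bijective x)

/-- The permutation group `𝒢(X)` of a cycle set. -/
noncomputable def G (C : CycleSet X) : Subgroup (Equiv.Perm X) :=
  Subgroup.closure (Set.range C.sigma)

/-- A cycle set is indecomposable if `𝒢(X)` acts transitively on `X`. -/
def Indecomposable (C : CycleSet X) : Prop := ∀ x y : X, ∃ g ∈ C.G, g x = y

/-- A cycle set is uniconnected if `𝒢(X)` acts regularly on `X`. -/
def Uniconnected (C : CycleSet X) : Prop :=
  ∀ x y : X, ∃! g : Equiv.Perm X, g ∈ C.G ∧ g x = y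

/-- `MPLrel C n a b` holds iff `a`, `b` have the same image in the `n`-th iterated
retraction `Ret^n(X)`. -/
def MPLrel (C : CycleSet X) : ℕ → X → X → Prop
  | 0 => Eq
  | n + 1 => fun a b => ∀ z, MPLrel C n (C.mul a z) (C.mul b z)

/-- A cycle set has multipermutation level `n` if `n` is minimal with `|Ret^n(X)| = 1`. -/
def MPL (C : CycleSet X) (n : ℕ) : Prop :=
  (∀ a b, MPLrel C n a b) ∧ ∀ m < n, ∃ a b, ¬ MPLrel C m a b

end CycleSet

/-- `𝒜` is the system of blocks generated by a block `B` for the subgroup `G` of `Sym(Z)`. -/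
def IsBlockSystem {Z : Type*} (G : Subgroup (Equiv.Perm Z)) (𝒜 : Set (Set Z)) : Prop :=
  ∃ B : Set Z, B.Nonempty ∧
    (∀ g ∈ G, (⇑g) '' B = B ∨ Disjoint ((⇑g) '' B) B) ∧
    𝒜 = {A | ∃ g ∈ G, A = (⇑g) '' B}

/-- Two systems of blocks are orthogonal if any two members meet in exactly one point. -/
def OrthSystems {Z : Type*} (𝒜 ℬ : Set (Set Z)) : Prop :=
  ∀ A ∈ 𝒜, ∀ B ∈ ℬ, ∃ z, A ∩ B = {z}

/-- The system of blocks `𝓑_X = {{x} × S : x ∈ X}` on `X × S`. -/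
def BXblocks (X S : Type*) : Set (Set (X × S)) :=
  {B | ∃ x : X, B = {p : X × S | p.1 = x}}

/-- The system of blocks `{X × {s} : s ∈ S}` on `X × S`. -/
def SBlocks (X S : Type*) : Set (Set (X × S)) :=
  {B | ∃ s : S, B = {p : X × S | p.2 = s}}

/-- The system of blocks formed by the classes of the retract relation. -/
def RetBlocks {X : Type*} (C : CycleSet X) : Set (Set X) :=
  {B | ∃ x : X, B = {y : X | ∀ z, C.mul y z = C.mul x z}}

/-!
As `𝒢(X)` is abelian and transitive, `g ↦ g x` turns `X` into the cyclic group `A = 𝒢(X)` with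
`a · b = b + f a`, where `f a = σ_{a x}` and the values of `f` generate `A`. The fibres of `f` are
the cosets of its group of periods `W ≠ 0`, and `f` induces a map of the same kind on `A ⧸ W`.
By induction on `|A|`, `χ ∘ f` is constant for every `χ : A →+ ℤ/p`: if `p` divides `|A ⧸ W|`,
then `χ` vanishes on `W` because `A` is cyclic, and factors through `A ⧸ W`; otherwise `χ ∘ f`
descends to a cocycle on `A ⧸ W`, and cocycles with values in a group without `|A ⧸ W|`-torsion
are constant, being additive in the period along each fibre of `f`. So a `χ ≠ 0` vanishing at one
`f a` would vanish on the generating set `range f`.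
-/

theorem AddSubmonoid.eq_top_of_addSubgroup_closure_eq_top {A : Type*} [AddGroup A] [Finite A]
    {s : Set A} (hs : AddSubgroup.closure s = ⊤) {S : AddSubmonoid A} (h : s ⊆ S) : S = ⊤ := by
  rw [eq_top_iff, ← AddSubgroup.top_toAddSubmonoid, ← hs,
    AddSubgroup.closure_toAddSubmonoid_of_finite]
  exact AddSubmonoid.closure_le.mpr h

/-- On an abelian group `A`, `x · y = y + f x` is a cycle set exactly when `IsCocycle f f`. -/
def IsCocycle {A M : Type*} [Add A] [Add M] (f : A → A) (φ : A → M) : Prop :=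
  ∀ x y, φ (y + f x) + φ x = φ (x + f y) + φ y

open AddSubgroup

section Periods

variable {A β : Type*} [AddCommGroup A]

def periods (f : A → β) : AddSubgroup A where
  carrier := {w | Function.Periodic f w}
  zero_mem' x := by rw [add_zero]
  add_mem' hv hw := Function.Periodic.add_period hv hw
  neg_mem' hw := Function.Periodic.neg hw

def liftPeriodic (W : AddSubgroup A) (φ : A → β) (hφ : W ≤ periods φ) : A ⧸ W → β :=
  Quotient.lift φ fun a b hab => by
    simpa using (hφ (QuotientAddGroup.leftRel_apply.mp hab) a).symm

def retract (f : A → A) : A ⧸ periods f → A ⧸ periods f :=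
  liftPeriodic (periods f) (QuotientAddGroup.mk' (periods f) ∘ f) fun _ hw a => by
    simp only [Function.comp_apply, hw a]

theorem closure_range_retract {f : A → A} (hgen : closure (Set.range f) = ⊤) :
    closure (Set.range (retract f)) = ⊤ := by
  have hrange : Set.range (retract f) = QuotientAddGroup.mk' (periods f) '' Set.range f := by
    rw [← (QuotientAddGroup.mk'_surjective (periods f)).range_comp, ← Set.range_comp]
    rfl
  rw [hrange, ← AddMonoidHom.map_closure, hgen,
    map_top_of_surjective _ (QuotientAddGroup.mk'_surjective _)]

end Periods

namespace IsCocycle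

variable {A M : Type*} [AddCommGroup A] [AddCommGroup M] {f : A → A} {φ : A → M}

theorem map {N : Type*} [AddCommGroup N] (hφ : IsCocycle f φ) (χ : M →+ N) :
    IsCocycle f (χ ∘ φ) := fun x y => by
  simpa only [Function.comp_apply, map_add] using congrArg χ (hφ x y)

theorem sub_eq_sub_of_eq (hφ : IsCocycle f φ) {a b : A} (hab : f a = f b) (z : A) :
    φ (a + f z) - φ a = φ (b + f z) - φ b := by
  have ha := hφ z a
  have hb := hφ z b
  rw [hab] at ha
  rw [sub_eq_sub_iff_add_eq_add, ← add_right_cancel_iff (a := φ z)]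
  calc φ (a + f z) + φ b + φ z = φ (z + f b) + φ a + φ b := by rw [add_right_comm, ha]
    _ = φ (b + f z) + φ a + φ z := by rw [add_right_comm (φ (b + f z)), hb, add_right_comm]

theorem descend (hφ : IsCocycle f φ) (hφW : periods f ≤ periods φ) :
    IsCocycle (retract f) (liftPeriodic (periods f) φ hφW) := by
  intro x y
  induction x using QuotientAddGroup.induction_on
  induction y using QuotientAddGroup.induction_on
  exact hφ _ _

theorem isCocycle_retract (hf : IsCocycle f f) : IsCocycle (retract f) (retract f) :=
  (hf.map (QuotientAddGroup.mk' (periods f))).descend _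

variable [Finite A]

theorem apply_add_eq_of_apply_eq (hf : IsCocycle f f) (hgen : closure (Set.range f) = ⊤)
    (hφ : IsCocycle f φ) {a b : A} (hab : f a = f b) (u : A) :
    f (a + u) = f (b + u) ∧ φ (a + u) - φ a = φ (b + u) - φ b := by
  let S : AddSubmonoid A :=
    { carrier := {u | ∀ a b, f a = f b →
        f (a + u) = f (b + u) ∧ φ (a + u) - φ a = φ (b + u) - φ b}
      zero_mem' := fun a b hab => by simpa using hab
      add_mem' := fun {u v} hu hv a b hab => by
        obtain ⟨hu₁, hu₂⟩ := hu a b hab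
        obtain ⟨hv₁, hv₂⟩ := hv _ _ hu₁
        simp only [← add_assoc]
        refine ⟨hv₁, ?_⟩
        rw [← sub_add_sub_cancel _ (φ (a + u)), ← sub_add_sub_cancel (φ (b + u + v)) (φ (b + u)),
          hv₂, hu₂] }
  have hS : Set.range f ⊆ S := by
    rintro _ ⟨z, rfl⟩ a b hab
    have hfz := hf.sub_eq_sub_of_eq hab z
    rw [hab, sub_left_inj] at hfz
    exact ⟨hfz, hφ.sub_eq_sub_of_eq hab z⟩
  have hu : u ∈ S := by
    rw [AddSubmonoid.eq_top_of_addSubgroup_closure_eq_top hgen hS]; trivial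
  exact hu a b hab

theorem eq_iff_sub_mem_periods (hf : IsCocycle f f) (hgen : closure (Set.range f) = ⊤)
    {a b : A} : f a = f b ↔ b - a ∈ periods f := by
  refine ⟨fun hab x => ?_, fun h => by simpa using (h a).symm⟩
  convert ((hf.apply_add_eq_of_apply_eq hgen hf hab (x - a)).1).symm using 2 <;> abel

theorem eq_zero_of_apply_eq_zero (hf : IsCocycle f f) (hgen : closure (Set.range f) = ⊤)
    {y : A} (hy : f y = 0) (a : A) : f a = 0 := by
  let S : AddSubmonoid A :=
    { carrier := {u | ∀ a, f a = 0 → f (a + u) = 0}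
      zero_mem' := fun a ha => by simpa using ha
      add_mem' := fun hu hv a ha => by rw [← add_assoc]; exact hv _ (hu a ha) }
  have hS : Set.range f ⊆ S := by
    rintro _ ⟨z, rfl⟩ a ha
    simpa [ha] using hf z a
  have hu : a - y ∈ S := by
    rw [AddSubmonoid.eq_top_of_addSubgroup_closure_eq_top hgen hS]; trivial
  simpa using hu y hy

theorem periods_ne_bot [Nontrivial A] (hf : IsCocycle f f) (hgen : closure (Set.range f) = ⊤) :
    periods f ≠ ⊥ := by
  intro hbot
  have hinj : Function.Injective f := fun a b hab => by
    rw [hf.eq_iff_sub_mem_periods hgen, hbot, mem_bot, sub_eq_zero] at hab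
    exact hab.symm
  obtain ⟨y, hy⟩ := (Finite.injective_iff_surjective.mp hinj) 0
  have hle : closure (Set.range f) ≤ ⊥ := by
    rw [closure_le]
    rintro _ ⟨a, rfl⟩
    exact hf.eq_zero_of_apply_eq_zero hgen hy a
  exact bot_ne_top (hgen ▸ le_bot_iff.mp hle).symm

theorem card_quotient_periods_lt [Nontrivial A] (hf : IsCocycle f f)
    (hgen : closure (Set.range f) = ⊤) : Nat.card (A ⧸ periods f) < Nat.card A := by
  rw [card_eq_card_quotient_mul_card_addSubgroup (periods f)]
  exact lt_mul_right Nat.card_pos ((one_lt_card_iff_ne_bot _).mpr (hf.periods_ne_bot hgen))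

theorem periods_le_periods_of_nsmul_injective (hf : IsCocycle f f)
    (hgen : closure (Set.range f) = ⊤) (hφ : IsCocycle f φ)
    (hM : ∀ c : M, Nat.card A • c = 0 → c = 0) : periods f ≤ periods φ := by
  intro w hw a
  let δ : periods f →+ M := AddMonoidHom.mk' (fun v => φ (a + v) - φ a) fun u v => by
    have hu : f (a + u) = f a := u.2 a
    simp only [coe_add, ← add_assoc]
    rw [← sub_add_sub_cancel _ (φ (a + u)), (hf.apply_add_eq_of_apply_eq hgen hφ hu v).2, add_comm]
  have hδ : Nat.card A • δ ⟨w, hw⟩ = 0 := by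
    rw [← map_nsmul, show Nat.card A • (⟨w, hw⟩ : periods f) = 0 from
      Subtype.ext (card_nsmul_eq_zero' (G := A)), map_zero]
  exact sub_eq_zero.mp (hM _ hδ)

theorem eq_of_nsmul_injective (hf : IsCocycle f f) (hgen : closure (Set.range f) = ⊤)
    (hφ : IsCocycle f φ) (hM : ∀ c : M, Nat.card A • c = 0 → c = 0) (a b : A) : φ a = φ b := by
  induction hn : Nat.card A using Nat.strong_induction_on generalizing A with
  | _ n ih =>
  subst hn
  rcases subsingleton_or_nontrivial A with hA | hA
  · rw [Subsingleton.elim a b]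
  have hM' : ∀ c : M, Nat.card (A ⧸ periods f) • c = 0 → c = 0 := fun c hc => by
    obtain ⟨k, hk⟩ := card_quotient_dvd_card (periods f)
    exact hM c (by rw [hk, mul_nsmul, hc, nsmul_zero])
  exact ih _ (hf.card_quotient_periods_lt hgen) hf.isCocycle_retract (closure_range_retract hgen)
    (hφ.descend (hf.periods_le_periods_of_nsmul_injective hgen hφ hM)) hM' a b rfl

end IsCocycle

theorem IsAddCyclic.le_ker_of_card_quotient_nsmul_eq_zero {A M : Type*} [AddCommGroup A]
    [AddCommGroup M] [IsAddCyclic A] (W : AddSubgroup A) (χ : A →+ M)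
    (hχ : ∀ a, Nat.card (A ⧸ W) • χ a = 0) : W ≤ χ.ker := by
  obtain ⟨g, hg⟩ := IsAddCyclic.exists_generator (α := A)
  have hgW : addOrderOf (g : A ⧸ W) = Nat.card (A ⧸ W) := by
    refine addOrderOf_eq_card_of_forall_mem_zmultiples fun q => ?_
    induction q using QuotientAddGroup.induction_on with
    | H a =>
      obtain ⟨k, rfl⟩ := mem_zmultiples_iff.mp (hg a)
      exact ⟨k, by simp⟩
  intro w hw
  obtain ⟨k, rfl⟩ := mem_zmultiples_iff.mp (hg w)
  have hk : (Nat.card (A ⧸ W) : ℤ) ∣ k := by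
    rw [← hgW, addOrderOf_dvd_iff_zsmul_eq_zero, ← QuotientAddGroup.mk_zsmul,
      QuotientAddGroup.eq_zero_iff]
    exact hw
  obtain ⟨j, rfl⟩ := hk
  rw [AddMonoidHom.mem_ker, map_zsmul, mul_comm, mul_zsmul, natCast_zsmul, hχ, zsmul_zero]

theorem IsCocycle.map_apply_eq {A : Type*} [AddCommGroup A] [Finite A] [IsAddCyclic A]
    {f : A → A} {p : ℕ} [Fact p.Prime] (hf : IsCocycle f f) (hgen : closure (Set.range f) = ⊤)
    (χ : A →+ ZMod p) (a b : A) : χ (f a) = χ (f b) := by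
  induction hn : Nat.card A using Nat.strong_induction_on generalizing A with
  | _ n ih =>
  subst hn
  rcases subsingleton_or_nontrivial A with hA | hA
  · rw [Subsingleton.elim a b]
  have : IsAddCyclic (A ⧸ periods f) :=
    isAddCyclic_of_surjective _ (QuotientAddGroup.mk'_surjective (periods f))
  by_cases hp : p ∣ Nat.card (A ⧸ periods f)
  · have hle := IsAddCyclic.le_ker_of_card_quotient_nsmul_eq_zero (periods f) χ fun c => by
      rw [nsmul_eq_mul, (ZMod.natCast_eq_zero_iff _ _).mpr hp, zero_mul]
    exact ih _ (hf.card_quotient_periods_lt hgen) hf.isCocycle_retract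
      (closure_range_retract hgen) (QuotientAddGroup.lift _ χ hle) a b rfl
  · have hχW : periods f ≤ periods (χ ∘ f) := fun w hw a => by
      simp only [Function.comp_apply, hw a]
    have hM : ∀ c : ZMod p, Nat.card (A ⧸ periods f) • c = 0 → c = 0 := fun c hc => by
      rw [nsmul_eq_mul] at hc
      exact (mul_eq_zero.mp hc).resolve_left (mt (ZMod.natCast_eq_zero_iff _ _).mp hp)
    exact hf.isCocycle_retract.eq_of_nsmul_injective (closure_range_retract hgen)
      ((hf.map χ).descend hχW) hM a b

theorem IsAddCyclic.exists_addMonoidHom_zmod_of_ne_top {A : Type*} [AddCommGroup A] [Finite A]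
    [IsAddCyclic A] {K : AddSubgroup A} (hK : K ≠ ⊤) :
    ∃ p, p.Prime ∧ ∃ χ : A →+ ZMod p, K ≤ χ.ker ∧ χ ≠ 0 := by
  have hQ : Nat.card (A ⧸ K) ≠ 1 := (one_lt_index_of_ne_top hK).ne'
  let e := zmodAddCyclicAddEquiv (isAddCyclic_of_surjective _ (QuotientAddGroup.mk'_surjective K))
  let χ : A →+ ZMod (Nat.card (A ⧸ K)).minFac :=
    (ZMod.castHom (Nat.minFac_dvd _) _).toAddMonoidHom.comp
      (e.symm.toAddMonoidHom.comp (QuotientAddGroup.mk' K))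
  refine ⟨_, Nat.minFac_prime hQ, χ, fun k hk => ?_, fun h => ?_⟩
  · simp [χ, (QuotientAddGroup.eq_zero_iff k).mpr hk]
  · have : Fact (Nat.card (A ⧸ K)).minFac.Prime := ⟨Nat.minFac_prime hQ⟩
    obtain ⟨a, ha⟩ := QuotientAddGroup.mk'_surjective K (e 1)
    have h1 : χ a = 1 := by
      change ZMod.castHom (Nat.minFac_dvd _) _ (e.symm (QuotientAddGroup.mk' K a)) = 1
      rw [ha, e.symm_apply_apply, map_one]
    simp [h] at h1

theorem IsCocycle.zmultiples_eq_top {A : Type*} [AddCommGroup A] [Finite A] [IsAddCyclic A]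
    {f : A → A} (hf : IsCocycle f f) (hgen : closure (Set.range f) = ⊤) (a : A) :
    zmultiples (f a) = ⊤ := by
  by_contra hne
  obtain ⟨p, hp, χ, hχa, hχ⟩ := IsAddCyclic.exists_addMonoidHom_zmod_of_ne_top hne
  have : Fact p.Prime := ⟨hp⟩
  have hker : closure (Set.range f) ≤ χ.ker := by
    rw [closure_le]
    rintro _ ⟨b, rfl⟩
    rw [SetLike.mem_coe, AddMonoidHom.mem_ker, hf.map_apply_eq hgen χ b a]
    exact hχa (mem_zmultiples _)
  rw [hgen, top_le_iff, AddMonoidHom.ker_eq_top_iff] at hker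
  exact hχ hker

namespace CycleSet

variable {X : Type*} (C : CycleSet X)

theorem sigma_mem_G (y : X) : C.sigma y ∈ C.G := Subgroup.subset_closure ⟨y, rfl⟩

noncomputable def sigmaG (y : X) : C.G := ⟨C.sigma y, C.sigma_mem_G y⟩

theorem closure_range_sigmaG : Subgroup.closure (Set.range C.sigmaG) = ⊤ := by
  have : Set.range C.sigmaG = ((↑) : C.G → Equiv.Perm X) ⁻¹' Set.range C.sigma := by
    ext g
    exact ⟨fun ⟨y, hy⟩ => ⟨y, congrArg Subtype.val hy⟩, fun ⟨y, hy⟩ => ⟨y, Subtype.ext hy⟩⟩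
  rw [this]
  exact Subgroup.closure_closure_coe_preimage

theorem sigmaG_mul_sigmaG_comm (u v : X) :
    C.sigmaG (C.mul u v) * C.sigmaG u = C.sigmaG (C.mul v u) * C.sigmaG v :=
  Subtype.ext (Equiv.ext (C.cycloid u v))

noncomputable def orbitSigma (x : X) : Additive C.G → Additive C.G :=
  fun a => Additive.ofMul (C.sigmaG (((Additive.toMul a : C.G) : Equiv.Perm X) x))

theorem isCocycle_orbitSigma (hcomm : ∀ g h : C.G, g * h = h * g) (x : X) :
    IsCocycle (C.orbitSigma x) (C.orbitSigma x) := by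
  have hx : ∀ g h : C.G, ((h * C.sigmaG ((g : Equiv.Perm X) x) : C.G) : Equiv.Perm X) x
      = C.mul ((g : Equiv.Perm X) x) ((h : Equiv.Perm X) x) :=
    fun g h => by rw [hcomm]; rfl
  intro a b
  apply Additive.toMul.injective
  simp only [orbitSigma, toMul_add, toMul_ofMul]
  rw [hx, hx]
  exact C.sigmaG_mul_sigmaG_comm _ _

theorem closure_range_orbitSigma (hind : C.Indecomposable) (x : X) :
    AddSubgroup.closure (Set.range (C.orbitSigma x)) = ⊤ := by
  have : Set.range (C.orbitSigma x) = Additive.toMul ⁻¹' Set.range C.sigmaG := by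
    ext a
    refine ⟨fun ⟨b, hb⟩ => ⟨_, congrArg Additive.toMul hb⟩, fun ⟨y, hy⟩ => ?_⟩
    obtain ⟨g, hg, rfl⟩ := hind x y
    exact ⟨Additive.ofMul ⟨g, hg⟩, congrArg Additive.ofMul hy⟩
  rw [this, ← Subgroup.toAddSubgroup_closure, closure_range_sigmaG]
  rfl

end CycleSet

/-- In a finite indecomposable cycle set with cyclic permutation group,
every `σ_x` generates the whole permutation group. -/
theorem stmt1 {X : Type} [Finite X] (C : CycleSet X)
    (hind : C.Indecomposable) (hcyc : IsCyclic C.G) :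
    ∀ x : X, Subgroup.zpowers (C.sigma x) = C.G := by
  intro x
  let _ : CommGroup C.G := IsCyclic.commGroup
  have : IsAddCyclic (Additive C.G) := isAddCyclic_additive_iff.mpr hcyc
  have hgen : AddSubgroup.zmultiples (C.orbitSigma x 0) = ⊤ :=
    (C.isCocycle_orbitSigma mul_comm x).zmultiples_eq_top (C.closure_range_orbitSigma hind x) 0
  refine le_antisymm (Subgroup.zpowers_le.mpr (C.sigma_mem_G x)) fun g hg => ?_
  obtain ⟨k, hk⟩ := AddSubgroup.mem_zmultiples_iff.mp
    (hgen ▸ AddSubgroup.mem_top (Additive.ofMul (⟨g, hg⟩ : C.G)))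
  refine ⟨k, ?_⟩
  simpa [CycleSet.orbitSigma, CycleSet.sigmaG] using
    congrArg (fun a => ((Additive.toMul a : C.G) : Equiv.Perm X)) hk
end

section
/- Let A be a finite left brace whose multiplicative group (A,∘) is nilpotent and suppose |A| = p_1^{n_1}⋯p_m^{n_m} with p_1, …, p_m distinct primes. Then each p_i-Sylow subgroup A_{p_i} of the additive group (A,+) is a sub-left-brace of A, and A is isomorphic as a left brace to the direct product A_{p_1} × ⋯ × A_{p_m}. -/
/-- A left brace structure on a type carrying an abelian additive group structure `+`
and a (multiplicative) group structure `∘` (written `*`). -/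
class LeftBrace (A : Type*) [AddCommGroup A] [Group A] : Prop where
  compat : ∀ a b c : A, a * (b + c) + a = a * b + a * c

section Brace

variable {A : Type*} [AddCommGroup A] [Group A]

/-- The map `λ_a : b ↦ -a + a ∘ b`, as a permutation of `A`. -/
def lam (a : A) : Equiv.Perm A where
  toFun b := -a + a * b
  invFun b := a⁻¹ * (a + b)
  left_inv b := by simp
  right_inv b := by simp

/-- A subset of a left brace is a sub-left-brace if it is simultaneously (the carrier of)
a subgroup of `(A,+)` and a subgroup of `(A,∘)`. -/
def IsSubBrace (B : Set A) : Prop :=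
  ∃ (Sa : AddSubgroup A) (Sm : Subgroup A), (Sa : Set A) = B ∧ (Sm : Set A) = B

/-- `A(x)`: the smallest sub-left-brace containing `x`. -/
def braceClosure (x : A) : Set A := ⋂₀ {B : Set A | IsSubBrace B ∧ x ∈ B}

end Brace

/-- The socle series of a left brace: `Soc_0 = {0}`,
`Soc_{n+1} = {a | ∀ b, a + b - a∘b ∈ Soc_n}`. -/
def socSeq (A : Type*) [AddCommGroup A] [Group A] : ℕ → Set A
  | 0 => {0}
  | n + 1 => {a | ∀ b, a + b - a * b ∈ socSeq A n}

/-- A left brace has multipermutation level `n` if `n` is minimal with `Soc_n(A) = A`. -/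
def BraceMPL (A : Type*) [AddCommGroup A] [Group A] (n : ℕ) : Prop :=
  socSeq A n = Set.univ ∧ ∀ m < n, socSeq A m ≠ Set.univ

/-- The `q`-primary component of the additive group of `A`; for a finite abelian group
this is the (unique) `q`-Sylow subgroup of `(A,+)`. -/
def primaryComponent (A : Type*) [AddCommGroup A] (q : ℕ) : Set A :=
  {a : A | ∃ k : ℕ, q ^ k • a = 0}

/-!
The map `λ_a b = -a + a ∘ b` is an action of `(A,∘)` on `(A,+)` by automorphisms, so every
primary component `A_p` is `λ`-invariant and therefore also a subgroup of `(A,∘)`, of `p`-power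
order. In the nilpotent group `(A,∘)`, elements `x ∈ A_p` and `y ∈ A_q` with `p ≠ q` lie in
distinct normal Sylow subgroups and commute; comparing `x + λ_x y = y + λ_y x` componentwise
gives `λ_x y = y`. Consequently a sum of elements of distinct components is also their
`∘`-product, and the additive projections `a ↦ e_p • a` onto the components (with `e_p ∈ ℤ`
Chinese-remainder idempotents) are multiplicative: writing `a = e_p • a ∘ r` with `r` the sum of
the other components of `a`, the automorphisms `λ_a` and `λ_{e_p • a}` agree on `A_p`.
-/

open Function

theorem exists_crt_idempotents {R ι : Type*} [CommRing R] [Fintype ι] [DecidableEq ι]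
    {q : ι → R} (hq : Pairwise (IsCoprime on q)) :
    ∃ e : ι → R, (∀ i, ∏ j, q j ∣ q i * e i) ∧ ∏ j, q j ∣ ∑ i, e i - 1 := by
  cases isEmpty_or_nonempty ι
  · exact ⟨0, isEmptyElim, by simp⟩
  obtain ⟨μ, hμ⟩ := exists_sum_eq_one_iff_pairwise_coprime'.mpr hq
  refine ⟨fun i => μ i * ∏ j ∈ {i}ᶜ, q j, fun i => ⟨μ i, ?_⟩, ?_⟩
  · rw [← Finset.prod_mul_prod_compl {i}, Finset.prod_singleton]
    ring
  · rw [hμ, sub_self]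
    exact dvd_zero _

section Decomposition

variable {A ι : Type*} [AddCommGroup A] {S : ι → AddSubgroup A} {e : ι → ℤ}

theorem zsmul_eq_zero_of_mem_of_ne (hS : Pairwise (Disjoint on S))
    (he : ∀ i (a : A), e i • a ∈ S i) {i j : ι} (hij : i ≠ j) {a : A} (ha : a ∈ S j) :
    e i • a = 0 :=
  AddSubgroup.disjoint_def.mp (hS hij) (he i a) ((S j).zsmul_mem ha _)

theorem zsmul_eq_self_of_mem [Fintype ι] (hS : Pairwise (Disjoint on S))
    (he : ∀ i (a : A), e i • a ∈ S i) (hsum : ∀ a : A, ∑ i, e i • a = a) {i : ι}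
    {a : A} (ha : a ∈ S i) : e i • a = a := by
  conv_rhs => rw [← hsum a]
  rw [Finset.sum_eq_single i (fun j _ hji => zsmul_eq_zero_of_mem_of_ne hS he hji ha)
    (fun h => (h (Finset.mem_univ i)).elim)]

def equivPiOfZsmul [Fintype ι] (hS : Pairwise (Disjoint on S))
    (he : ∀ i (a : A), e i • a ∈ S i) (hsum : ∀ a : A, ∑ i, e i • a = a) :
    A ≃ ∀ i, S i where
  toFun a i := ⟨e i • a, he i a⟩
  invFun v := ∑ i, (v i : A)
  left_inv := hsum
  right_inv v := funext fun i => Subtype.ext <| by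
    change e i • ∑ j, (v j : A) = v i
    rw [Finset.smul_sum, Finset.sum_eq_single i
      (fun j _ hji => zsmul_eq_zero_of_mem_of_ne hS he hji.symm (v j).2)
      (fun h => (h (Finset.mem_univ i)).elim)]
    exact zsmul_eq_self_of_mem hS he hsum (v i).2

end Decomposition

section PrimaryComponent

def primaryAddSubgroup (A : Type*) [AddCommGroup A] (q : ℕ) : AddSubgroup A where
  carrier := primaryComponent A q
  zero_mem' := ⟨0, smul_zero _⟩
  add_mem' := by
    rintro a b ⟨k, hk⟩ ⟨l, hl⟩
    refine ⟨k + l, ?_⟩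
    rw [smul_add, pow_add, mul_nsmul, hk, smul_zero, zero_add, mul_nsmul', hl, smul_zero]
  neg_mem' := by
    rintro a ⟨k, hk⟩
    exact ⟨k, by rw [smul_neg, hk, neg_zero]⟩

variable {A : Type*} [AddCommGroup A]

theorem map_mem_primaryAddSubgroup {F : Type*} [FunLike F A A] [AddMonoidHomClass F A A]
    (f : F) {q : ℕ} {a : A} (ha : a ∈ primaryAddSubgroup A q) :
    f a ∈ primaryAddSubgroup A q := by
  obtain ⟨k, hk⟩ := ha
  exact ⟨k, by rw [← map_nsmul, hk, map_zero]⟩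

theorem disjoint_primaryAddSubgroup {p q : ℕ} (hpq : p.Coprime q) :
    Disjoint (primaryAddSubgroup A p) (primaryAddSubgroup A q) := by
  rw [AddSubgroup.disjoint_def]
  rintro a ⟨k, hk⟩ ⟨l, hl⟩
  have h := Nat.dvd_gcd (addOrderOf_dvd_of_nsmul_eq_zero hk) (addOrderOf_dvd_of_nsmul_eq_zero hl)
  rwa [Nat.Coprime.gcd_eq_one (hpq.pow k l), Nat.dvd_one, AddMonoid.addOrderOf_eq_one_iff] at h

theorem exists_card_primaryAddSubgroup_dvd_pow [Finite A] (p : ℕ) :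
    ∃ k, Nat.card (primaryAddSubgroup A p) ∣ p ^ k := by
  have h : IsPGroup p (Multiplicative ↥(primaryAddSubgroup A p)) := fun g => by
    obtain ⟨k, hk⟩ := g.toAdd.2
    exact ⟨k, Multiplicative.toAdd.injective (Subtype.ext hk)⟩
  obtain ⟨k, hk⟩ := isPGroup_iff_card_dvd_pow.mp h
  exact ⟨k, hk⟩

theorem exists_zsmul_mem_primaryAddSubgroup_sum_eq_self [Fintype A] {ι : Type*} [Fintype ι]
    [DecidableEq ι] {p n : ι → ℕ} (hp : ∀ i, (p i).Prime) (hdist : Injective p)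
    (hcard : Fintype.card A = ∏ i, p i ^ n i) :
    ∃ e : ι → ℤ, (∀ i (a : A), e i • a ∈ primaryAddSubgroup A (p i)) ∧
      ∀ a : A, ∑ i, e i • a = a := by
  have hq : Pairwise (IsCoprime on fun i => ((p i ^ n i : ℕ) : ℤ)) := fun i j hij =>
    Nat.isCoprime_iff_coprime.mpr
      (Nat.Coprime.pow _ _ ((Nat.coprime_primes (hp i) (hp j)).mpr (hdist.ne hij)))
  obtain ⟨e, hmul, hsum⟩ := exists_crt_idempotents hq
  have hkill (c : ℤ) (hc : ∏ i, ((p i ^ n i : ℕ) : ℤ) ∣ c) (a : A) : c • a = 0 := by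
    rw [← Nat.cast_prod, ← hcard] at hc
    exact addOrderOf_dvd_iff_zsmul_eq_zero.mp
      ((Int.natCast_dvd_natCast.mpr addOrderOf_dvd_card).trans hc)
  refine ⟨e, fun i a => ⟨n i, ?_⟩, fun a => ?_⟩
  · rw [← natCast_zsmul, smul_smul]
    exact hkill _ (hmul i) a
  · have h := hkill _ hsum a
    rwa [sub_smul, one_smul, sub_eq_zero, Finset.sum_smul] at h

end PrimaryComponent

theorem Group.IsNilpotent.commute_of_isPGroup {G : Type*} [Group G] [Finite G]
    [Group.IsNilpotent G] {p q : ℕ} [Fact p.Prime] [Fact q.Prime] (hpq : p ≠ q)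
    {H K : Subgroup G} (hH : IsPGroup p H) (hK : IsPGroup q K) {x y : G} (hx : x ∈ H)
    (hy : y ∈ K) : Commute x y := by
  obtain ⟨P, hP⟩ := hH.exists_le_sylow
  obtain ⟨Q, hQ⟩ := hK.exists_le_sylow
  exact Subgroup.commute_of_normal_of_disjoint _ _ inferInstance inferInstance
    (IsPGroup.disjoint_of_ne p q hpq _ _ P.isPGroup' Q.isPGroup') x y (hP hx) (hQ hy)

namespace LeftBrace

variable {A : Type*} [AddCommGroup A] [Group A] [LeftBrace A]

theorem one_eq_zero : (1 : A) = 0 := by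
  simpa using compat (1 : A) 0 0

theorem mul_add_eq (a b c : A) : a * (b + c) = a * b - a + a * c := by
  rw [eq_sub_of_add_eq (compat a b c)]
  abel

theorem mul_zero_eq (a : A) : a * 0 = a := by
  rw [← one_eq_zero, mul_one]

theorem mul_neg_eq (a b : A) : a * -b = a - a * b + a := by
  have h := compat a b (-b)
  rw [add_neg_cancel, mul_zero_eq] at h
  rw [eq_sub_of_add_eq' h.symm]
  abel

def lambdaHom : A →* AddMonoid.End A where
  toFun a :=
    { toFun := fun b => -a + a * b
      map_zero' := by rw [mul_zero_eq, neg_add_cancel]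
      map_add' := fun b c => by
        rw [mul_add_eq]
        abel }
  map_one' := by
    ext b
    change -1 + 1 * b = b
    rw [one_mul, one_eq_zero, neg_zero, zero_add]
  map_mul' a b := by
    ext c
    change -(a * b) + a * b * c = -a + a * (-b + b * c)
    rw [mul_add_eq, mul_neg_eq, mul_assoc]
    abel

theorem lambdaHom_apply (a b : A) : lambdaHom a b = -a + a * b := rfl

theorem mul_eq_add_lambdaHom (a b : A) : a * b = a + lambdaHom a b := by
  rw [lambdaHom_apply, add_neg_cancel_left]

theorem lambdaHom_mul_apply (a b c : A) : lambdaHom (a * b) c = lambdaHom a (lambdaHom b c) := by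
  rw [map_mul]
  rfl

def subgroupOfLambdaInvariant (S : AddSubgroup A) (hS : ∀ a, ∀ b ∈ S, lambdaHom a b ∈ S) :
    Subgroup A where
  carrier := S
  one_mem' := by
    rw [SetLike.mem_coe, one_eq_zero]
    exact S.zero_mem
  mul_mem' {a b} ha hb := by
    rw [SetLike.mem_coe, mul_eq_add_lambdaHom]
    exact S.add_mem ha (hS a b hb)
  inv_mem' {a} ha := by
    have h : lambdaHom a⁻¹ (-a) = a⁻¹ := by
      rw [lambdaHom_apply, mul_neg_eq, inv_mul_cancel, one_eq_zero]
      abel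
    rw [SetLike.mem_coe, ← h]
    exact hS _ _ (S.neg_mem ha)

theorem lambdaHom_apply_eq_self_of_commute {S T : AddSubgroup A}
    (hS : ∀ a, ∀ b ∈ S, lambdaHom a b ∈ S) (hT : ∀ a, ∀ b ∈ T, lambdaHom a b ∈ T)
    (hST : Disjoint S T) {x y : A} (hx : x ∈ S) (hy : y ∈ T) (hxy : Commute x y) :
    lambdaHom x y = y := by
  have h : x - lambdaHom y x = y - lambdaHom x y := by
    rw [sub_eq_sub_iff_add_eq_add, ← mul_eq_add_lambdaHom, ← mul_eq_add_lambdaHom]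
    exact hxy.eq
  have h0 : y - lambdaHom x y = 0 :=
    AddSubgroup.disjoint_def.mp hST (h ▸ sub_mem hx (hS y x hx)) (sub_mem hy (hT x y hy))
  exact (sub_eq_zero.mp h0).symm

theorem lambdaHom_mem_primaryAddSubgroup (q : ℕ) (a : A) {b : A}
    (hb : b ∈ primaryAddSubgroup A q) : lambdaHom a b ∈ primaryAddSubgroup A q :=
  map_mem_primaryAddSubgroup (lambdaHom a) hb

variable (A) in
def primarySubgroup (q : ℕ) : Subgroup A :=
  subgroupOfLambdaInvariant (primaryAddSubgroup A q) (lambdaHom_mem_primaryAddSubgroup q)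

theorem isPGroup_primarySubgroup [Finite A] (p : ℕ) : IsPGroup p (primarySubgroup A p) :=
  IsPGroup.of_card_dvd_pow (exists_card_primaryAddSubgroup_dvd_pow p).choose_spec

theorem lambdaHom_apply_eq_self_of_mem_primaryAddSubgroup [Finite A] [Group.IsNilpotent A]
    {p q : ℕ} (hp : p.Prime) (hq : q.Prime) (hpq : p ≠ q) {x y : A}
    (hx : x ∈ primaryAddSubgroup A p) (hy : y ∈ primaryAddSubgroup A q) :
    lambdaHom x y = y :=
  have : Fact p.Prime := ⟨hp⟩
  have : Fact q.Prime := ⟨hq⟩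
  lambdaHom_apply_eq_self_of_commute (lambdaHom_mem_primaryAddSubgroup p)
    (lambdaHom_mem_primaryAddSubgroup q)
    (disjoint_primaryAddSubgroup ((Nat.coprime_primes hp hq).mpr hpq)) hx hy
    (Group.IsNilpotent.commute_of_isPGroup hpq (isPGroup_primarySubgroup p)
      (isPGroup_primarySubgroup q) hx hy)

variable {ι : Type*} {S : ι → AddSubgroup A}

theorem lambdaHom_sum_eq_sum
    (hS : ∀ i j, i ≠ j → ∀ x ∈ S i, ∀ y ∈ S j, lambdaHom x y = y)
    {s : Finset ι} {k : ι} (hk : k ∉ s) {x : A} (hx : x ∈ S k) {y : ι → A}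
    (hy : ∀ j ∈ s, y j ∈ S j) : lambdaHom x (∑ j ∈ s, y j) = ∑ j ∈ s, y j := by
  rw [map_sum]
  exact Finset.sum_congr rfl fun j hj =>
    hS k j (fun h => hk (h ▸ hj)) x hx (y j) (hy j hj)

theorem lambdaHom_sum_apply [DecidableEq ι]
    (hS : ∀ i j, i ≠ j → ∀ x ∈ S i, ∀ y ∈ S j, lambdaHom x y = y)
    {s : Finset ι} {k : ι} (hk : k ∉ s) {y : ι → A} (hy : ∀ j ∈ s, y j ∈ S j) {z : A}
    (hz : z ∈ S k) : lambdaHom (∑ j ∈ s, y j) z = z := by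
  induction s using Finset.induction_on with
  | empty => rw [Finset.sum_empty, ← one_eq_zero, map_one]; rfl
  | insert i s hi ih =>
    have hki : k ≠ i := fun h => hk (h ▸ Finset.mem_insert_self i s)
    have hs : ∀ j ∈ s, y j ∈ S j := fun j hj => hy j (Finset.mem_insert_of_mem hj)
    have hprod : y i + ∑ j ∈ s, y j = y i * ∑ j ∈ s, y j := by
      rw [mul_eq_add_lambdaHom, lambdaHom_sum_eq_sum hS hi (hy i (Finset.mem_insert_self i s)) hs]
    rw [Finset.sum_insert hi, hprod, lambdaHom_mul_apply,
      ih (fun h => hk (Finset.mem_insert_of_mem h)) hs,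
      hS i k hki.symm _ (hy i (Finset.mem_insert_self i s)) z hz]

theorem zsmul_mul_eq_mul_zsmul [Fintype ι] [DecidableEq ι]
    (hS : ∀ i j, i ≠ j → ∀ x ∈ S i, ∀ y ∈ S j, lambdaHom x y = y) {e : ι → ℤ}
    (he : ∀ i (a : A), e i • a ∈ S i) (hsum : ∀ a : A, ∑ i, e i • a = a) (k : ι)
    (a b : A) : e k • (a * b) = e k • a * e k • b := by
  have hrest : ∀ j ∈ Finset.univ.erase k, e j • a ∈ S j := fun j _ => he j a
  have ha : a = e k • a * ∑ j ∈ Finset.univ.erase k, e j • a := by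
    rw [mul_eq_add_lambdaHom, lambdaHom_sum_eq_sum hS (Finset.notMem_erase k _) (he k a) hrest,
      Finset.add_sum_erase _ (fun j => e j • a) (Finset.mem_univ k), hsum]
  calc e k • (a * b) = e k • a + lambdaHom a (e k • b) := by
        rw [mul_eq_add_lambdaHom, smul_add, map_zsmul]
    _ = e k • a + lambdaHom (e k • a) (e k • b) := by
        congr 1
        conv_lhs => rw [ha]
        rw [lambdaHom_mul_apply, lambdaHom_sum_apply hS (Finset.notMem_erase k _) hrest (he k b)]
    _ = e k • a * e k • b := (mul_eq_add_lambdaHom _ _).symm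

end LeftBrace

/-- A finite left brace with nilpotent multiplicative group and
`|A| = p₁^{n₁} ⋯ p_m^{n_m}` is the direct product (as a left brace) of the Sylow
subgroups of its additive group, each of which is a sub-left-brace. -/
theorem stmt3 {A : Type} [Fintype A] [AddCommGroup A] [Group A] [LeftBrace A]
    (hnil : Group.IsNilpotent A)
    (m : ℕ) (p n : Fin m → ℕ) (hp : ∀ i, (p i).Prime) (hdist : Function.Injective p)
    (hcard : Fintype.card A = ∏ i, p i ^ n i) :
    (∀ i, ∃ (Sa : AddSubgroup A) (Sm : Subgroup A),
        (Sa : Set A) = primaryComponent A (p i) ∧ (Sm : Set A) = primaryComponent A (p i)) ∧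
    ∃ f : A ≃ ∀ i, ↥(primaryComponent A (p i)),
      (∀ a b : A, ∀ i, ((f (a + b) i : A)) = (f a i : A) + (f b i : A)) ∧
      (∀ a b : A, ∀ i, ((f (a * b) i : A)) = (f a i : A) * (f b i : A)) := by
  obtain ⟨e, he, hsum⟩ := exists_zsmul_mem_primaryAddSubgroup_sum_eq_self hp hdist hcard
  have hdisj : Pairwise (Disjoint on fun i => primaryAddSubgroup A (p i)) := fun i j hij =>
    disjoint_primaryAddSubgroup ((Nat.coprime_primes (hp i) (hp j)).mpr (hdist.ne hij))
  have hlam : ∀ i j, i ≠ j →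
      ∀ x ∈ primaryAddSubgroup A (p i), ∀ y ∈ primaryAddSubgroup A (p j),
        LeftBrace.lambdaHom x y = y := fun i j hij x hx y hy =>
    LeftBrace.lambdaHom_apply_eq_self_of_mem_primaryAddSubgroup (hp i) (hp j) (hdist.ne hij) hx hy
  refine ⟨fun i => ⟨primaryAddSubgroup A (p i), LeftBrace.primarySubgroup A (p i), rfl, rfl⟩,
    equivPiOfZsmul hdisj he hsum, fun a b i => smul_add (e i) a b,
    fun a b i => LeftBrace.zsmul_mul_eq_mul_zsmul hlam he hsum i a b⟩
end

section
/- Let A be a left brace, X a transitive cycle base of A, and g ∈ X. Define on A the binary operation a•b := (λ_a(g))⁻ ∘ b for all a, b ∈ A, where c⁻ denotes the inverse of c in (A,∘). Then (A,•) is a uniconnected cycle set and its permutation group 𝒢(A,•) is isomorphic to the multiplicative group (A,∘). -/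
/-! For every `g`, the operation `a • b = (λ_a g)⁻ ∘ b` is a cycle set: `σ_a` is left
multiplication by `(λ_a g)⁻`, and `(λ_{a•b} g)⁻ ∘ (λ_a g)⁻ = (λ_a g + λ_b g)⁻` is symmetric in
`a, b`. So `𝒢(A,•)` is the image, under the left regular representation, of the subgroup of
`(A,∘)` generated by the orbit `X`. That subgroup is λ-invariant with `X`, and a λ-invariant
subgroup of `(A,∘)` is also an additive subgroup, because `a + b = a ∘ λ_{a⁻}(b)` and
`-a = λ_a(a⁻)`. As `X` generates `(A,+)`, it therefore generates `(A,∘)`, and `𝒢(A,•)` is the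
regular representation of `(A,∘)`. -/

section BraceLemmas

variable {A : Type*} [AddCommGroup A] [Group A]

theorem lam_apply (a b : A) : lam a b = -a + a * b := rfl

theorem mul_eq_add_lam (a b : A) : a * b = a + lam a b := by
  rw [lam_apply]; abel

variable [LeftBrace A]

theorem LeftBrace.one_eq_zero_s4 : (1 : A) = 0 := by
  simpa using LeftBrace.compat (1 : A) 0 0

theorem lam_add (a b c : A) : lam a (b + c) = lam a b + lam a c := by
  have h := LeftBrace.compat a b c
  rw [← eq_sub_iff_add_eq] at h
  simp only [lam_apply, h]; abel

theorem lam_zero (a : A) : lam a 0 = 0 :=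
  map_zero (AddMonoidHom.mk' (lam a) (lam_add a))

theorem lam_neg (a b : A) : lam a (-b) = -lam a b :=
  map_neg (AddMonoidHom.mk' (lam a) (lam_add a)) b

theorem lam_one (b : A) : lam (1 : A) b = b := by
  rw [lam_apply, one_mul, LeftBrace.one_eq_zero_s4, neg_zero, zero_add]

theorem lam_mul (a b c : A) : lam (a * b) c = lam a (lam b c) := by
  conv_rhs => rw [lam_apply b, lam_add, lam_neg, lam_apply, lam_apply, ← mul_assoc]
  rw [lam_apply]; abel

theorem mul_lam_inv (a b : A) : a * lam a⁻¹ b = a + b := by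
  rw [mul_eq_add_lam, ← lam_mul, mul_inv_cancel, lam_one]

theorem lam_self_inv (a : A) : lam a a⁻¹ = -a := by
  have h := mul_eq_add_lam a a⁻¹
  rw [mul_inv_cancel, LeftBrace.one_eq_zero_s4] at h
  exact eq_neg_of_add_eq_zero_right h.symm

theorem lam_inv_self (a : A) : lam a⁻¹ a = -a⁻¹ := by
  simpa using lam_self_inv a⁻¹

theorem lam_inv_neg (a : A) : lam (-a)⁻¹ a = (-a)⁻¹ := by
  simpa [lam_neg, lam_self_inv] using lam_self_inv (-a)⁻¹

theorem lam_mul_eq_mul_lam (b u v : A) :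
    lam b (u * v) = lam b u * lam ((lam b u)⁻¹ * (b * u)) v := by
  rw [lam_mul _ (b * u), mul_lam_inv, lam_mul, ← lam_add, ← mul_eq_add_lam]

theorem mul_lam_inv_mul_lam (p b g : A) : p * lam (p⁻¹ * b) g = p + lam b g := by
  rw [lam_mul, mul_lam_inv]

end BraceLemmas

section LamInvariant

variable {A : Type*} [AddCommGroup A] [Group A]

def IsLamInvariant (S : Set A) : Prop := ∀ a, ∀ s ∈ S, lam a s ∈ S

theorem IsLamInvariant.union {S T : Set A} (hS : IsLamInvariant S) (hT : IsLamInvariant T) :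
    IsLamInvariant (S ∪ T) := by
  rintro a s (hs | hs)
  exacts [Or.inl (hS a s hs), Or.inr (hT a s hs)]

variable [LeftBrace A] {S : Set A}

theorem isLamInvariant_range_lam (g : A) : IsLamInvariant (Set.range fun a : A => lam a g) := by
  rintro a _ ⟨c, rfl⟩
  exact ⟨a * c, lam_mul a c g⟩

theorem IsLamInvariant.inv_neg_mem (hS : IsLamInvariant S) {s : A} (hs : s ∈ S) :
    (-s)⁻¹ ∈ S := by
  simpa only [lam_inv_neg] using hS (-s)⁻¹ s hs

theorem IsLamInvariant.inv (hS : IsLamInvariant S) : IsLamInvariant S⁻¹ := by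
  intro b y hy
  have h : lam b y = -lam (b * y) y⁻¹ := by
    rw [← lam_neg, ← lam_self_inv, ← lam_mul, inv_inv, mul_inv_cancel_right]
  rw [Set.mem_inv, h]
  exact hS.inv_neg_mem (hS _ _ hy)

theorem IsLamInvariant.submonoidClosure (hS : IsLamInvariant S) :
    IsLamInvariant (Submonoid.closure S : Set A) := by
  intro b m hm
  induction hm using Submonoid.closure_induction generalizing b with
  | mem x hx => exact Submonoid.subset_closure (hS b x hx)
  | one =>
    rw [LeftBrace.one_eq_zero_s4, lam_zero, ← LeftBrace.one_eq_zero_s4]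
    exact one_mem _
  | mul u v _ _ ihu ihv =>
    rw [lam_mul_eq_mul_lam]
    exact mul_mem (ihu b) (ihv _)

theorem IsLamInvariant.subgroupClosure (hS : IsLamInvariant S) :
    IsLamInvariant (Subgroup.closure S : Set A) := by
  rw [← Subgroup.coe_toSubmonoid, Subgroup.closure_toSubmonoid]
  exact (hS.union hS.inv).submonoidClosure

theorem IsLamInvariant.addSubgroupClosure_subset {H : Subgroup A}
    (hH : IsLamInvariant (H : Set A)) (hS : S ⊆ H) : (AddSubgroup.closure S : Set A) ⊆ H := by
  intro a ha
  induction ha using AddSubgroup.closure_induction with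
  | mem x hx => exact hS hx
  | zero => rw [← LeftBrace.one_eq_zero_s4]; exact one_mem H
  | add u v _ _ hu hv =>
    rw [← mul_lam_inv]
    exact mul_mem hu (hH _ _ hv)
  | neg u _ hu =>
    rw [← lam_self_inv]
    exact hH _ _ (inv_mem hu)

theorem IsLamInvariant.subgroupClosure_eq_top (hS : IsLamInvariant S)
    (h : AddSubgroup.closure S = ⊤) : Subgroup.closure S = ⊤ := by
  refine (Subgroup.eq_top_iff' _).mpr fun a => ?_
  refine hS.subgroupClosure.addSubgroupClosure_subset Subgroup.subset_closure ?_
  rw [h]; trivial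

end LamInvariant

namespace CycleSet

variable {A : Type*} [AddCommGroup A] [Group A] [LeftBrace A]

def ofBrace (g : A) : CycleSet A where
  mul a b := (lam a g)⁻¹ * b
  mul_bijective a := (Equiv.mulLeft (lam a g)⁻¹).bijective
  cycloid x y z := by
    simp only [← mul_assoc, ← mul_inv_rev, mul_lam_inv_mul_lam, add_comm]
  nondeg := by
    refine Function.bijective_iff_has_inverse.mpr
      ⟨fun b => (-lam b g)⁻¹ * b, fun a => ?_, fun b => ?_⟩
    · simp only [lam_mul, lam_inv_self, neg_neg, inv_inv, mul_inv_cancel_left]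
    · simp only [lam_mul, lam_inv_neg, inv_inv, mul_inv_cancel_left]

theorem ofBrace_sigma (g a : A) : (ofBrace g).sigma a = MulAction.toPermHom A A (lam a g)⁻¹ :=
  Equiv.ext fun _ => rfl

theorem ofBrace_G (g : A) :
    (ofBrace g).G =
      (Subgroup.closure (Set.range fun a => lam a g)).map (MulAction.toPermHom A A) := by
  rw [MonoidHom.map_closure, ← Subgroup.closure_inv, G]
  congr 1
  ext e
  simp only [Set.mem_range, ofBrace_sigma, Set.mem_inv, Set.mem_image, map_inv,
    exists_exists_eq_and, inv_eq_iff_eq_inv]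

theorem uniconnected_of_G_eq_range {X : Type*} [Group X] {C : CycleSet X}
    (h : C.G = (MulAction.toPermHom X X).range) : C.Uniconnected := by
  intro x y
  refine ⟨MulAction.toPerm (y * x⁻¹), ⟨h ▸ ⟨_, rfl⟩, by simp⟩, ?_⟩
  rintro e ⟨he, rfl⟩
  obtain ⟨m, rfl⟩ := h ▸ he
  simp

end CycleSet

theorem stmt4_general {A : Type} [AddCommGroup A] [Group A] [LeftBrace A]
    (X : Set A) (g : A)
    (horb : X = Set.range fun a : A => lam a g)
    (hgen : AddSubgroup.closure X = ⊤) :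
    ∃ C : CycleSet A,
      (∀ a b : A, C.mul a b = (lam a g)⁻¹ * b) ∧
      C.Uniconnected ∧ Nonempty (C.G ≃* A) := by
  subst horb
  have hG : (CycleSet.ofBrace g).G = (MulAction.toPermHom A A).range := by
    rw [CycleSet.ofBrace_G, (isLamInvariant_range_lam g).subgroupClosure_eq_top hgen,
      MonoidHom.range_eq_map]
  refine ⟨CycleSet.ofBrace g, fun _ _ => rfl, CycleSet.uniconnected_of_G_eq_range hG, ?_⟩
  exact ⟨(MulEquiv.subgroupCongr hG).trans
    (MonoidHom.ofInjective (MulAction.toPerm_injective (α := A) (β := A))).symm⟩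

/-- Rump. Given a left brace `A`, a transitive cycle base `X` and
`g ∈ X`, the operation `a • b := (λ_a(g))⁻ ∘ b` makes `A` a uniconnected cycle set
whose permutation group is isomorphic to `(A,∘)`. -/
theorem stmt4 {A : Type} [AddCommGroup A] [Group A] [LeftBrace A]
    (X : Set A) (g : A) (hg : g ∈ X)
    (horb : X = Set.range fun a : A => lam a g)
    (hgen : AddSubgroup.closure X = ⊤) :
    ∃ C : CycleSet A,
      (∀ a b : A, C.mul a b = (lam a g)⁻¹ * b) ∧
      C.Uniconnected ∧ Nonempty (C.G ≃* A) :=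
  stmt4_general X g horb hgen
end

section
/- Let X be a finite indecomposable cycle set such that the system of blocks 𝓑_{Ret(X)} of 𝒢(X) on X formed by the classes of the retract relation admits an orthogonal system of blocks. Then there exist a set S and a map α : Ret(X) → Sym(S) such that the operation on Ret(X)×S given by (u,s)·(v,t) := (u·v, α_u(t)) makes Ret(X)×S into a cycle set isomorphic to X. -/
/-- The retract relation `x ∼ y ⇔ σ_x = σ_y` as a setoid; `Ret(X)` is its quotient. -/
def retSetoid {X : Type*} (C : CycleSet X) : Setoid X where
  r a b := ∀ z, C.mul a z = C.mul b z
  iseqv := ⟨fun _ _ => rfl, fun h z => (h z).symm, fun h1 h2 z => (h1 z).trans (h2 z)⟩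

/-- If `X` is a finite indecomposable cycle set such that the block
system `𝓑_{Ret(X)}` (the classes of the retract relation) admits an orthogonal system
of blocks, then `X` is isomorphic to a cycle set on `Ret(X) × S` with operation
`(u,s)·(v,t) = (u·v, α_u(t))` for some set `S` and some `α : Ret(X) → Sym(S)`. -/
theorem stmt7 {X : Type} [Finite X] (C : CycleSet X) (hind : C.Indecomposable)
    (horth : ∃ 𝒜, IsBlockSystem C.G 𝒜 ∧ OrthSystems 𝒜 (RetBlocks C)) :
    ∃ (S : Type) (α : Quotient (retSetoid C) → Equiv.Perm S)
      (D : CycleSet (Quotient (retSetoid C) × S)),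
      (∀ (x y : X) (s t : S),
        D.mul (Quotient.mk (retSetoid C) x, s) (Quotient.mk (retSetoid C) y, t) =
          (Quotient.mk (retSetoid C) (C.mul x y), α (Quotient.mk (retSetoid C) x) t)) ∧
      ∃ f : X ≃ Quotient (retSetoid C) × S,
        ∀ a b, f (C.mul a b) = D.mul (f a) (f b) := by
  classical
  obtain ⟨𝒜, ⟨B, hBne, hBbl, h𝒜⟩, hOrth⟩ := horth
  have hcomp : ∀ (g g' : Equiv.Perm X) (s : Set X),
      (⇑g) '' ((⇑g') '' s) = (⇑(g * g')) '' s := by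
    intro g g' s; rw [← Set.image_comp]; rfl
  have hσmem : ∀ x : X, C.sigma x ∈ C.G := fun x =>
    Subgroup.subset_closure ⟨x, rfl⟩
  have himg : ∀ g ∈ C.G, ∀ A ∈ 𝒜, (⇑g) '' A ∈ 𝒜 := by
    intro g hg A hA
    rw [h𝒜] at hA ⊢
    obtain ⟨g', hg', rfl⟩ := hA
    exact ⟨g * g', mul_mem hg hg', hcomp g g' B⟩
  have hdisj : ∀ A ∈ 𝒜, ∀ A' ∈ 𝒜, A = A' ∨ Disjoint A A' := by
    intro A hA A' hA'
    rw [h𝒜] at hA hA'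
    obtain ⟨g, hg, rfl⟩ := hA
    obtain ⟨g', hg', rfl⟩ := hA'
    rcases hBbl (g'⁻¹ * g) (mul_mem (inv_mem hg') hg) with h | h
    · left
      have h2 : (⇑g') '' ((⇑(g'⁻¹ * g)) '' B) = (⇑g') '' B := by rw [h]
      rwa [hcomp, show g' * (g'⁻¹ * g) = g by group] at h2
    · right
      have h2 : Disjoint ((⇑g') '' ((⇑(g'⁻¹ * g)) '' B)) ((⇑g') '' B) :=
        (Set.disjoint_image_iff g'.injective).mpr h
      rwa [hcomp, show g' * (g'⁻¹ * g) = g by group] at h2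
  have hcover : ∀ x : X, ∃ A ∈ 𝒜, x ∈ A := by
    intro x
    obtain ⟨b₀, hb₀⟩ := hBne
    obtain ⟨g, hg, hgx⟩ := hind b₀ x
    exact ⟨(⇑g) '' B, himg g hg B (by rw [h𝒜]; exact ⟨1, one_mem _, by simp⟩),
      ⟨b₀, hb₀, hgx⟩⟩
  set S := {A : Set X // A ∈ 𝒜} with hS
  let blk : X → S := fun x => ⟨(hcover x).choose, (hcover x).choose_spec.1⟩
  have hblk : ∀ x : X, x ∈ (blk x).1 := fun x => (hcover x).choose_spec.2
  have hub : ∀ (z : X) (A A' : S), z ∈ A.1 → z ∈ A'.1 → A = A' := by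
    intro z A A' hz hz'
    rcases hdisj A.1 A.2 A'.1 A'.2 with h | h
    · exact Subtype.ext h
    · exact (Set.disjoint_left.mp h hz hz').elim
  -- retract classes
  let cls : X → Set X := fun x => {y | ∀ z, C.mul y z = C.mul x z}
  have hclsmem : ∀ x, cls x ∈ RetBlocks C := fun x => ⟨x, rfl⟩
  have hclsself : ∀ x, x ∈ cls x := fun x z => rfl
  -- congruence lemmas
  have hcong1 : ∀ a b z : X, (∀ w, C.mul a w = C.mul b w) →
      ∀ w, C.mul (C.mul z a) w = C.mul (C.mul z b) w := by
    intro a b z h w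
    obtain ⟨w', rfl⟩ := (C.mul_bijective z).2 w
    calc C.mul (C.mul z a) (C.mul z w') = C.mul (C.mul a z) (C.mul a w') := C.cycloid z a w'
      _ = C.mul (C.mul b z) (C.mul b w') := by rw [h z, h w']
      _ = C.mul (C.mul z b) (C.mul z w') := (C.cycloid z b w').symm
  have hcong2 : ∀ a b c : X, (∀ w, C.mul a w = C.mul c w) →
      ∀ w, C.mul (C.mul a b) w = C.mul (C.mul c b) w := by
    intro a b c h w
    obtain ⟨w', rfl⟩ := (C.mul_bijective a).2 w
    calc C.mul (C.mul a b) (C.mul a w') = C.mul (C.mul b a) (C.mul b w') := C.cycloid a b w'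
      _ = C.mul (C.mul b c) (C.mul b w') := hcong1 a c b h (C.mul b w')
      _ = C.mul (C.mul c b) (C.mul c w') := (C.cycloid c b w').symm
      _ = C.mul (C.mul c b) (C.mul a w') := by rw [← h w']
  have hcong : ∀ a b c d : X, (∀ w, C.mul a w = C.mul c w) → (∀ w, C.mul b w = C.mul d w) →
      ∀ w, C.mul (C.mul a b) w = C.mul (C.mul c d) w := by
    intro a b c d h1 h2 w
    rw [hcong2 a b c h1 w, hcong1 b d c h2 w]
  -- the permutations α
  have hσimg : ∀ (a : X) (A : S), (⇑(C.sigma a)) '' A.1 ∈ 𝒜 :=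
    fun a A => himg _ (hσmem a) _ A.2
  have hσinvimg : ∀ (a : X) (A : S), (⇑(C.sigma a)⁻¹) '' A.1 ∈ 𝒜 :=
    fun a A => himg _ (inv_mem (hσmem a)) _ A.2
  let αe : X → Equiv.Perm S := fun a =>
    { toFun := fun A => ⟨_, hσimg a A⟩
      invFun := fun A => ⟨_, hσinvimg a A⟩
      left_inv := fun A => Subtype.ext (show
        (⇑(C.sigma a)⁻¹) '' ((⇑(C.sigma a)) '' A.1) = A.1 by
        rw [hcomp, inv_mul_cancel]; simp)
      right_inv := fun A => Subtype.ext (show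
        (⇑(C.sigma a)) '' ((⇑(C.sigma a)⁻¹) '' A.1) = A.1 by
        rw [hcomp, mul_inv_cancel]; simp) }
  have αewd : ∀ a c : X, (∀ w, C.mul a w = C.mul c w) → αe a = αe c := by
    intro a c h
    have hσ : C.sigma a = C.sigma c := Equiv.ext h
    apply Equiv.ext
    intro A
    exact Subtype.ext (by show (⇑(C.sigma a)) '' A.1 = (⇑(C.sigma c)) '' A.1; rw [hσ])
  let α : Quotient (retSetoid C) → Equiv.Perm S := Quotient.lift αe αewd
  -- the bijection f
  let f0 : X → Quotient (retSetoid C) × S := fun x => (Quotient.mk (retSetoid C) x, blk x)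
  have hinj : Function.Injective f0 := by
    intro x y h
    have h1 : Quotient.mk (retSetoid C) x = Quotient.mk (retSetoid C) y := congrArg Prod.fst h
    have h2 : blk x = blk y := congrArg Prod.snd h
    have hxy : ∀ z, C.mul x z = C.mul y z := Quotient.exact h1
    obtain ⟨z, hz⟩ := hOrth (blk x).1 (blk x).2 (cls y) (hclsmem y)
    have hx : x ∈ (blk x).1 ∩ cls y := ⟨hblk x, fun w => hxy w⟩
    have hy : y ∈ (blk x).1 ∩ cls y := ⟨h2 ▸ hblk y, hclsself y⟩
    rw [hz] at hx hy
    exact hx.trans hy.symm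
  have hsurj : Function.Surjective f0 := by
    rintro ⟨u, A⟩
    obtain ⟨x, rfl⟩ := Quotient.exists_rep u
    obtain ⟨z, hz⟩ := hOrth A.1 A.2 (cls x) (hclsmem x)
    have hzmem : z ∈ A.1 ∩ cls x := hz ▸ rfl
    refine ⟨z, Prod.ext ?_ ?_⟩
    · exact Quotient.sound (fun w => hzmem.2 w)
    · exact hub z (blk z) A (hblk z) hzmem.1
  let f : X ≃ Quotient (retSetoid C) × S := Equiv.ofBijective f0 ⟨hinj, hsurj⟩
  let D : CycleSet (Quotient (retSetoid C) × S) :=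
    { mul := fun p q => f (C.mul (f.symm p) (f.symm q))
      mul_bijective := fun p => f.bijective.comp ((C.mul_bijective _).comp f.symm.bijective)
      cycloid := by
        intro p q r
        simp only [Equiv.symm_apply_apply]
        rw [C.cycloid]
      nondeg := f.bijective.comp (C.nondeg.comp f.symm.bijective) }
  refine ⟨S, α, D, ?_, ⟨f, fun a b => ?_⟩⟩
  · intro x y s t
    set a := f.symm (Quotient.mk (retSetoid C) x, s) with hadef
    set b := f.symm (Quotient.mk (retSetoid C) y, t) with hbdef
    have ha : (Quotient.mk (retSetoid C) a, blk a) = (Quotient.mk (retSetoid C) x, s) :=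
      f.apply_symm_apply _
    have hb : (Quotient.mk (retSetoid C) b, blk b) = (Quotient.mk (retSetoid C) y, t) :=
      f.apply_symm_apply _
    have ha1 : Quotient.mk (retSetoid C) a = Quotient.mk (retSetoid C) x := congrArg Prod.fst ha
    have ha2 : blk a = s := congrArg Prod.snd ha
    have hb1 : Quotient.mk (retSetoid C) b = Quotient.mk (retSetoid C) y := congrArg Prod.fst hb
    have hb2 : blk b = t := congrArg Prod.snd hb
    have hax : ∀ w, C.mul a w = C.mul x w := Quotient.exact ha1
    have hby : ∀ w, C.mul b w = C.mul y w := Quotient.exact hb1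
    show (Quotient.mk (retSetoid C) (C.mul a b), blk (C.mul a b)) =
      (Quotient.mk (retSetoid C) (C.mul x y), α (Quotient.mk (retSetoid C) x) t)
    refine Prod.ext ?_ ?_
    · exact Quotient.sound (hcong a b x y hax hby)
    · rw [← ha1, ← hb2]
      show blk (C.mul a b) = αe a (blk b)
      refine hub (C.mul a b) _ _ (hblk _) ?_
      exact ⟨b, hblk b, rfl⟩
  · show f (C.mul a b) = f (C.mul (f.symm (f a)) (f.symm (f b)))
    rw [f.symm_apply_apply, f.symm_apply_apply]
end

section
/- Let p be an odd prime, s ≥ 1, and let X := ℤ/p^{2s}ℤ with operation x·y := y + 1 + x p^s; then X is an indecomposable cycle set of multipermutation level 2. Let k be an integer coprime to p and define f : X → X by f(j) := k(j + 2^{-1} p^s j(j−1)), where 2^{-1} is the inverse of 2 in ℤ/p^{2s}ℤ, and let α : X → Sym(ℤ/p^{2s}ℤ) be given by α_x := translation by f(x). Then the operation (x,s')·(y,t) := (x·y, t + f(x)) makes X×ℤ/p^{2s}ℤ into a constant orthogonal dynamical extension of X of multipermutation level 3; moreover Ret(X×ℤ/p^{2s}ℤ) ≅ X and 𝒢(X×ℤ/p^{2s}ℤ)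 ≅ ℤ/p^{2s}ℤ × ℤ/p^{2s}ℤ. -/
/-- The map `f(j) = k (j + 2⁻¹ pˢ j (j-1))` on `ℤ/p^{2s}ℤ`. -/
def ff (p s : ℕ) (k : ℤ) (j : ZMod (p ^ (2 * s))) : ZMod (p ^ (2 * s)) :=
  (k : ZMod (p ^ (2 * s))) *
    (j + (2 : ZMod (p ^ (2 * s)))⁻¹ * (p : ZMod (p ^ (2 * s))) ^ s * j * (j - 1))

namespace S11

/-- auxiliary: the cycle-set operation on `ℤ/p^{2s}ℤ`. -/
def Cm (p s : ℕ) (x y : ZMod (p ^ (2 * s))) : ZMod (p ^ (2 * s)) :=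
  y + (1 + x * (p : ZMod (p ^ (2 * s))) ^ s)

/-- auxiliary: the extension operation. -/
def Em (p s : ℕ) (k : ℤ) (a b : ZMod (p ^ (2 * s)) × ZMod (p ^ (2 * s))) :
    ZMod (p ^ (2 * s)) × ZMod (p ^ (2 * s)) :=
  (Cm p s a.1 b.1, b.2 + ff p s k a.1)

lemma shear_bij {A B : Type*} [AddCommGroup B] (g : A → A) (f : A → B)
    (hg : Function.Bijective g) :
    Function.Bijective (fun a : A × B => (g a.1, a.2 + f a.1)) := by
  constructor
  · rintro ⟨a1, a2⟩ ⟨b1, b2⟩ hab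
    simp only [Prod.mk.injEq] at hab
    obtain ⟨h1, h2⟩ := hab
    obtain rfl : a1 = b1 := hg.injective h1
    obtain rfl : a2 = b2 := add_right_cancel h2
    rfl
  · rintro ⟨c1, c2⟩
    obtain ⟨a1, ha1⟩ := hg.surjective c1
    exact ⟨(a1, c2 - f a1), by simp [ha1]⟩

end S11

/-- For `p` an odd prime, `s ≥ 1` and `k` coprime to `p`, the cycle set
`X = ℤ/p^{2s}ℤ` with `x·y = y + 1 + x pˢ` is indecomposable of multipermutation level 2,
and `(x,s')·(y,t) := (x·y, t + f(x))` makes `X × ℤ/p^{2s}ℤ` a constant orthogonal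
dynamical extension of `X` of multipermutation level 3, with `Ret(X × ℤ/p^{2s}ℤ) ≅ X`
and permutation group `ℤ/p^{2s}ℤ × ℤ/p^{2s}ℤ`. -/
theorem stmt11 (p : ℕ) (hp : p.Prime) (hodd : p ≠ 2) (s : ℕ) (hs : 1 ≤ s)
    (k : ℤ) (hk : IsCoprime k (p : ℤ)) :
    ∃ C : CycleSet (ZMod (p ^ (2 * s))),
      (∀ x y, C.mul x y = y + 1 + x * (p : ZMod (p ^ (2 * s))) ^ s) ∧
      C.Indecomposable ∧ C.MPL 2 ∧
      ∃ E : CycleSet (ZMod (p ^ (2 * s)) × ZMod (p ^ (2 * s))),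
        (∀ x s' y t, E.mul (x, s') (y, t) = (C.mul x y, t + ff p s k x)) ∧
        E.Indecomposable ∧
        (∃ 𝒜, IsBlockSystem E.G 𝒜 ∧
          OrthSystems 𝒜 (BXblocks (ZMod (p ^ (2 * s))) (ZMod (p ^ (2 * s))))) ∧
        E.MPL 3 ∧
        (∃ f : ZMod (p ^ (2 * s)) × ZMod (p ^ (2 * s)) → ZMod (p ^ (2 * s)),
          Function.Surjective f ∧
          (∀ a b, f a = f b ↔ ∀ z, E.mul a z = E.mul b z) ∧
          (∀ a b, f (E.mul a b) = C.mul (f a) (f b))) ∧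
        Nonempty (E.G ≃* Multiplicative (ZMod (p ^ (2 * s)) × ZMod (p ^ (2 * s)))) := by
  have hp1 : 1 < p := hp.one_lt
  haveI : Fact (1 < p ^ (2 * s)) := ⟨Nat.one_lt_pow (by omega) hp1⟩
  haveI : NeZero (p ^ (2 * s)) := ⟨(pow_pos hp.pos (2 * s)).ne'⟩
  -- basic arithmetic facts
  have h2s0 : ((p : ZMod (p ^ (2 * s)))) ^ (2 * s) = 0 := by
    have h0 : ((p ^ (2 * s) : ℕ) : ZMod (p ^ (2 * s))) = 0 := ZMod.natCast_self _
    push_cast at h0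
    exact h0
  have hP2 : (p : ZMod (p ^ (2 * s))) ^ s * (p : ZMod (p ^ (2 * s))) ^ s = 0 := by
    rw [← pow_add, show s + s = 2 * s by ring]
    exact h2s0
  have hPne : (p : ZMod (p ^ (2 * s))) ^ s ≠ 0 := by
    intro h
    rw [show ((p : ZMod (p ^ (2 * s)))) ^ s = ((p ^ s : ℕ) : ZMod (p ^ (2 * s))) by push_cast; ring] at h
    rw [ZMod.natCast_eq_zero_iff] at h
    have h1 := Nat.le_of_dvd (pow_pos hp.pos s) h
    have h2 : p ^ s < p ^ (2 * s) := Nat.pow_lt_pow_right hp1 (by omega)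
    omega
  have h2u : IsUnit (2 : ZMod (p ^ (2 * s))) := by
    rw [show (2 : ZMod (p ^ (2 * s))) = ((2 : ℕ) : ZMod (p ^ (2 * s))) by norm_cast]
    rw [ZMod.isUnit_iff_coprime]
    exact ((Nat.coprime_primes Nat.prime_two hp).mpr (Ne.symm hodd)).pow_right _
  have h2 : (2 : ZMod (p ^ (2 * s)))⁻¹ * 2 = 1 := ZMod.inv_mul_of_unit _ h2u
  obtain ⟨u, hu⟩ : ∃ u : ZMod (p ^ (2 * s)), u * (k : ZMod (p ^ (2 * s))) = 1 := by
    obtain ⟨a, b, hab⟩ := (hk.pow_right (n := 2 * s) : IsCoprime k ((p : ℤ) ^ (2 * s)))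
    refine ⟨(a : ZMod (p ^ (2 * s))), ?_⟩
    have hc := congrArg (fun z : ℤ => (z : ZMod (p ^ (2 * s)))) hab
    push_cast at hc
    rw [h2s0] at hc
    simpa using hc
  have hkQ : (k : ZMod (p ^ (2 * s))) * (p : ZMod (p ^ (2 * s))) ^ s ≠ 0 := by
    intro h
    exact hPne (by linear_combination u * h - (p : ZMod (p ^ (2 * s))) ^ s * hu)
  -- ff lemmas
  have ff_add : ∀ j m : ZMod (p ^ (2 * s)),
      ff p s k (j + m * (p : ZMod (p ^ (2 * s))) ^ s) = ff p s k j + k * m * (p : ZMod (p ^ (2 * s))) ^ s := by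
    intro j m
    simp only [ff]
    linear_combination ((k : ZMod (p ^ (2 * s))) * (2 : ZMod (p ^ (2 * s)))⁻¹ *
      (2 * j * m + m * m * (p : ZMod (p ^ (2 * s))) ^ s - m)) * hP2
  have ff_succ : ∀ j : ZMod (p ^ (2 * s)),
      ff p s k (j + 1) = ff p s k j + k * (1 + (p : ZMod (p ^ (2 * s))) ^ s * j) := by
    intro j
    simp only [ff]
    linear_combination ((k : ZMod (p ^ (2 * s))) * (p : ZMod (p ^ (2 * s))) ^ s * j) * h2
  have ff_zero : ff p s k 0 = 0 := by simp only [ff]; ring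
  have ff_one : ff p s k 1 = k := by simp only [ff]; ring
  have hkey : ∀ a b : ZMod (p ^ (2 * s)),
      a * (p : ZMod (p ^ (2 * s))) ^ s = b * (p : ZMod (p ^ (2 * s))) ^ s →
      ff p s k a = ff p s k b → a = b := by
    intro a b hab hf
    have hd : (p : ZMod (p ^ (2 * s))) ^ s * (a - b) = 0 := by linear_combination hab
    simp only [ff] at hf
    have hk0 : (k : ZMod (p ^ (2 * s))) * (a - b) = 0 := by
      linear_combination hf - ((k : ZMod (p ^ (2 * s))) * (2 : ZMod (p ^ (2 * s)))⁻¹ * (a + b - 1)) * hd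
    have : a - b = 0 := by linear_combination u * hk0 - (a - b) * hu
    exact sub_eq_zero.mp this
  have hswap : ∀ x y : ZMod (p ^ (2 * s)),
      ff p s k x + ff p s k (S11.Cm p s x y) = ff p s k y + ff p s k (S11.Cm p s y x) := by
    intro x y
    rw [show S11.Cm p s x y = (y + 1) + x * (p : ZMod (p ^ (2 * s))) ^ s from by
          simp only [S11.Cm]; ring,
        show S11.Cm p s y x = (x + 1) + y * (p : ZMod (p ^ (2 * s))) ^ s from by
          simp only [S11.Cm]; ring,
        ff_add, ff_add, ff_succ, ff_succ]
    ring
  -- C-level inverse lemmas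
  have hgL : ∀ x : ZMod (p ^ (2 * s)),
      (S11.Cm p s x x - 1) * (1 - (p : ZMod (p ^ (2 * s))) ^ s) = x := by
    intro x; simp only [S11.Cm]; linear_combination (-x) * hP2
  have hgR : ∀ y : ZMod (p ^ (2 * s)),
      S11.Cm p s ((y - 1) * (1 - (p : ZMod (p ^ (2 * s))) ^ s))
        ((y - 1) * (1 - (p : ZMod (p ^ (2 * s))) ^ s)) = y := by
    intro y; simp only [S11.Cm]; linear_combination (1 - y) * hP2
  -- the cycle set C
  have Cbij : ∀ x, Function.Bijective (S11.Cm p s x) := by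
    intro x
    exact Function.bijective_iff_has_inverse.mpr
      ⟨fun y => y - (1 + x * (p : ZMod (p ^ (2 * s))) ^ s),
       fun y => add_sub_cancel_right _ _, fun y => sub_add_cancel _ _⟩
  have Ccyc : ∀ x y z, S11.Cm p s (S11.Cm p s x y) (S11.Cm p s x z)
      = S11.Cm p s (S11.Cm p s y x) (S11.Cm p s y z) := by
    intro x y z
    simp only [S11.Cm]
    linear_combination (x - y) * hP2
  have Cnondeg : Function.Bijective (fun x => S11.Cm p s x x) :=
    Function.bijective_iff_has_inverse.mpr
      ⟨fun y => (y - 1) * (1 - (p : ZMod (p ^ (2 * s))) ^ s), fun x => hgL x, fun y => hgR y⟩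
  let C : CycleSet (ZMod (p ^ (2 * s))) := ⟨S11.Cm p s, Cbij, Ccyc, Cnondeg⟩
  -- the cycle set E
  have Ebij : ∀ a, Function.Bijective (S11.Em p s k a) := by
    intro a
    exact (Cbij a.1).prodMap (Equiv.addRight (ff p s k a.1)).bijective
  have Ecyc : ∀ a b c, S11.Em p s k (S11.Em p s k a b) (S11.Em p s k a c)
      = S11.Em p s k (S11.Em p s k b a) (S11.Em p s k b c) := by
    intro a b c
    rw [Prod.ext_iff]
    constructor
    · show S11.Cm p s (S11.Cm p s a.1 b.1) (S11.Cm p s a.1 c.1)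
        = S11.Cm p s (S11.Cm p s b.1 a.1) (S11.Cm p s b.1 c.1)
      exact Ccyc a.1 b.1 c.1
    · show (c.2 + ff p s k a.1) + ff p s k (S11.Cm p s a.1 b.1)
        = (c.2 + ff p s k b.1) + ff p s k (S11.Cm p s b.1 a.1)
      linear_combination hswap a.1 b.1
  have Enondeg : Function.Bijective (fun a => S11.Em p s k a a) :=
    S11.shear_bij (fun x => S11.Cm p s x x) (ff p s k) Cnondeg
  let E : CycleSet (ZMod (p ^ (2 * s)) × ZMod (p ^ (2 * s))) := ⟨S11.Em p s k, Ebij, Ecyc, Enondeg⟩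
  -- sigma as translations
  have hsigC : ∀ x : ZMod (p ^ (2 * s)),
      C.sigma x = Equiv.addRight (1 + x * (p : ZMod (p ^ (2 * s))) ^ s) := by
    intro x; ext y; rfl
  have hsigE : ∀ x t : ZMod (p ^ (2 * s)),
      E.sigma (x, t) = Equiv.addRight
        ((1 + x * (p : ZMod (p ^ (2 * s))) ^ s, ff p s k x) :
          ZMod (p ^ (2 * s)) × ZMod (p ^ (2 * s))) := by
    intro x t; refine Equiv.ext fun b => ?_; rfl
  -- powers of translations
  have hpowR : ∀ (v : ZMod (p ^ (2 * s))) (n : ℕ),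
      (Equiv.addRight v) ^ n = Equiv.addRight ((n : ZMod (p ^ (2 * s))) * v) := by
    intro v n
    induction n with
    | zero =>
      rw [pow_zero]
      ext x
      show x = x + (((0 : ℕ) : ZMod (p ^ (2 * s))) * v)
      rw [Nat.cast_zero, zero_mul, add_zero]
    | succ n ih =>
      rw [pow_succ, ih]
      ext x
      show (x + v) + ((n : ZMod (p ^ (2 * s))) * v) = x + (((n + 1 : ℕ) : ZMod (p ^ (2 * s))) * v)
      push_cast
      ring
  have hpowE : ∀ (v1 v2 : ZMod (p ^ (2 * s))) (n : ℕ),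
      (Equiv.addRight ((v1, v2) : ZMod (p ^ (2 * s)) × ZMod (p ^ (2 * s)))) ^ n
        = Equiv.addRight (((n : ZMod (p ^ (2 * s))) * v1, (n : ZMod (p ^ (2 * s))) * v2)) := by
    intro v1 v2 n
    induction n with
    | zero =>
      rw [pow_zero]
      refine Equiv.ext fun x => ?_
      show x = x + (((0 : ℕ) : ZMod (p ^ (2 * s))) * v1, ((0 : ℕ) : ZMod (p ^ (2 * s))) * v2)
      rw [Nat.cast_zero, zero_mul, zero_mul]
      show x = x + (0 : ZMod (p ^ (2 * s)) × ZMod (p ^ (2 * s)))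
      rw [add_zero]
    | succ n ih =>
      rw [pow_succ, ih]
      refine Equiv.ext fun x => ?_
      obtain ⟨x1, x2⟩ := x
      show ((x1 + v1) + (n : ZMod (p ^ (2 * s))) * v1, (x2 + v2) + (n : ZMod (p ^ (2 * s))) * v2)
        = (x1 + ((n + 1 : ℕ) : ZMod (p ^ (2 * s))) * v1, x2 + ((n + 1 : ℕ) : ZMod (p ^ (2 * s))) * v2)
      rw [Prod.mk.injEq]
      constructor <;> (push_cast; ring)
  have haddmulE : ∀ u' w : ZMod (p ^ (2 * s)) × ZMod (p ^ (2 * s)),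
      Equiv.addRight u' * Equiv.addRight w = Equiv.addRight (w + u') := by
    intro u' w; refine Equiv.ext fun x => ?_
    show (x + w) + u' = x + (w + u')
    rw [add_assoc]
  -- all translations in C.G
  have hone : Equiv.addRight (1 : ZMod (p ^ (2 * s))) ∈ C.G := by
    have h := Subgroup.subset_closure (Set.mem_range_self (f := C.sigma) 0)
    rwa [hsigC 0, show (1 + (0 : ZMod (p ^ (2 * s))) * (p : ZMod (p ^ (2 * s))) ^ s) = 1 from by
      ring] at h
  have haddC : ∀ a : ZMod (p ^ (2 * s)), Equiv.addRight a ∈ C.G := by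
    intro a
    have h := pow_mem hone a.val
    rw [hpowR] at h
    rwa [show ((a.val : ZMod (p ^ (2 * s))) * 1) = a from by
      simp [ZMod.natCast_val, ZMod.cast_id]] at h
  -- all translations in E.G
  have hmemE : ∀ x : ZMod (p ^ (2 * s)),
      Equiv.addRight ((1 + x * (p : ZMod (p ^ (2 * s))) ^ s, ff p s k x) :
        ZMod (p ^ (2 * s)) × ZMod (p ^ (2 * s))) ∈ E.G := by
    intro x
    have h := Subgroup.subset_closure (Set.mem_range_self (f := E.sigma) (x, 0))
    rwa [hsigE x 0] at h
  have hE10 : Equiv.addRight (((1 : ZMod (p ^ (2 * s))), (0 : ZMod (p ^ (2 * s)))) :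
      ZMod (p ^ (2 * s)) × ZMod (p ^ (2 * s))) ∈ E.G := by
    have h := hmemE 0
    rwa [show ((1 + (0 : ZMod (p ^ (2 * s))) * (p : ZMod (p ^ (2 * s))) ^ s, ff p s k 0))
        = (((1 : ZMod (p ^ (2 * s))), (0 : ZMod (p ^ (2 * s))))) from by
      rw [ff_zero, zero_mul, add_zero]] at h
  have haddE1 : ∀ a : ZMod (p ^ (2 * s)),
      Equiv.addRight ((a, (0 : ZMod (p ^ (2 * s)))) :
        ZMod (p ^ (2 * s)) × ZMod (p ^ (2 * s))) ∈ E.G := by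
    intro a
    have h := pow_mem hE10 a.val
    rw [hpowE] at h
    rwa [show (((a.val : ZMod (p ^ (2 * s))) * 1, (a.val : ZMod (p ^ (2 * s))) * 0))
        = ((a, (0 : ZMod (p ^ (2 * s))))) from by
      rw [mul_one, mul_zero, Prod.mk.injEq]
      exact ⟨by simp [ZMod.natCast_val, ZMod.cast_id], rfl⟩] at h
  have hEk : Equiv.addRight (((0 : ZMod (p ^ (2 * s))), ((k : ZMod (p ^ (2 * s))))) :
      ZMod (p ^ (2 * s)) × ZMod (p ^ (2 * s))) ∈ E.G := by
    have h1 := hmemE 1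
    have h3 := mul_mem (haddE1 (-(1 + 1 * (p : ZMod (p ^ (2 * s))) ^ s))) h1
    rw [haddmulE] at h3
    rwa [show ((1 + 1 * (p : ZMod (p ^ (2 * s))) ^ s, ff p s k 1)
          + ((-(1 + 1 * (p : ZMod (p ^ (2 * s))) ^ s), (0 : ZMod (p ^ (2 * s))))))
        = (((0 : ZMod (p ^ (2 * s))), ((k : ZMod (p ^ (2 * s))))) :
          ZMod (p ^ (2 * s)) × ZMod (p ^ (2 * s))) from by
      rw [ff_one]
      show ((1 + 1 * (p : ZMod (p ^ (2 * s))) ^ s) + -(1 + 1 * (p : ZMod (p ^ (2 * s))) ^ s),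
        (k : ZMod (p ^ (2 * s))) + 0) = _
      rw [Prod.mk.injEq]
      constructor <;> ring] at h3
  have hEbk : ∀ b : ZMod (p ^ (2 * s)),
      Equiv.addRight (((0 : ZMod (p ^ (2 * s))), b * (k : ZMod (p ^ (2 * s)))) :
        ZMod (p ^ (2 * s)) × ZMod (p ^ (2 * s))) ∈ E.G := by
    intro b
    have h := pow_mem hEk b.val
    rw [hpowE] at h
    rwa [show (((b.val : ZMod (p ^ (2 * s))) * 0, (b.val : ZMod (p ^ (2 * s))) * (k : ZMod (p ^ (2 * s)))))
        = (((0 : ZMod (p ^ (2 * s))), b * (k : ZMod (p ^ (2 * s))))) from by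
      rw [mul_zero, Prod.mk.injEq]
      exact ⟨rfl, by simp [ZMod.natCast_val, ZMod.cast_id]⟩] at h
  have haddE : ∀ v : ZMod (p ^ (2 * s)) × ZMod (p ^ (2 * s)), Equiv.addRight v ∈ E.G := by
    intro v
    have h := mul_mem (haddE1 v.1) (hEbk (v.2 * u))
    rw [haddmulE] at h
    rwa [show (((0 : ZMod (p ^ (2 * s))), (v.2 * u) * (k : ZMod (p ^ (2 * s))))
          + ((v.1, (0 : ZMod (p ^ (2 * s)))))) = v from by
      have hv2 : (v.2 * u) * (k : ZMod (p ^ (2 * s))) = v.2 := by rw [mul_assoc, hu, mul_one]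
      calc ((0 : ZMod (p ^ (2 * s))), (v.2 * u) * (k : ZMod (p ^ (2 * s))))
            + ((v.1, (0 : ZMod (p ^ (2 * s)))))
          = (0 + v.1, (v.2 * u) * (k : ZMod (p ^ (2 * s))) + 0) := rfl
        _ = (v.1, v.2) := by rw [zero_add, add_zero, hv2]
        _ = v := Prod.mk.eta] at h
  -- the translation homomorphism
  let T : Multiplicative (ZMod (p ^ (2 * s)) × ZMod (p ^ (2 * s))) →*
      Equiv.Perm (ZMod (p ^ (2 * s)) × ZMod (p ^ (2 * s))) :=
    MonoidHom.mk' (fun v => Equiv.addRight (Multiplicative.toAdd v)) (by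
      intro a b
      refine Equiv.ext fun x => ?_
      show x + (Multiplicative.toAdd a + Multiplicative.toAdd b)
        = (x + Multiplicative.toAdd b) + Multiplicative.toAdd a
      rw [add_comm (Multiplicative.toAdd a) (Multiplicative.toAdd b), ← add_assoc])
  have hTinj : Function.Injective ⇑T := by
    intro a b h
    have h0 : (0 : ZMod (p ^ (2 * s)) × ZMod (p ^ (2 * s))) + Multiplicative.toAdd a
        = 0 + Multiplicative.toAdd b := congrArg (fun e : Equiv.Perm _ => e 0) h
    rw [zero_add, zero_add] at h0
    exact Multiplicative.toAdd.injective h0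
  have hrange : E.G = T.range := by
    apply le_antisymm
    · show Subgroup.closure (Set.range E.sigma) ≤ T.range
      refine (Subgroup.closure_le _).mpr ?_
      rintro g ⟨⟨x, t⟩, rfl⟩
      exact ⟨Multiplicative.ofAdd ((1 + x * (p : ZMod (p ^ (2 * s))) ^ s, ff p s k x)),
        (hsigE x t).symm⟩
    · rintro g ⟨v, rfl⟩
      have e : T v = Equiv.addRight (Multiplicative.toAdd v) := rfl
      rw [e]
      exact haddE _
  -- images of the block
  have himg : ∀ v : ZMod (p ^ (2 * s)) × ZMod (p ^ (2 * s)),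
      (⇑(Equiv.addRight v)) '' {q : ZMod (p ^ (2 * s)) × ZMod (p ^ (2 * s)) | q.2 = 0}
        = {q | q.2 = v.2} := by
    intro v
    ext ⟨q1, q2⟩
    simp only [Set.mem_image, Set.mem_setOf_eq, Equiv.coe_addRight]
    constructor
    · rintro ⟨⟨w1, w2⟩, hw, he⟩
      have h2' := congrArg Prod.snd he
      simp only [Prod.snd_add] at h2'
      have hw' : w2 = 0 := hw
      show q2 = v.2
      rw [← h2', hw', zero_add]
    · intro hq
      refine ⟨(q1 - v.1, q2 - v.2), ?_, ?_⟩
      · show q2 - v.2 = 0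
        rw [hq, sub_self]
      · show ((q1 - v.1, q2 - v.2) : ZMod (p ^ (2 * s)) × ZMod (p ^ (2 * s))) + v = (q1, q2)
        have e : ((q1 - v.1, q2 - v.2) : ZMod (p ^ (2 * s)) × ZMod (p ^ (2 * s))) + v
            = (q1 - v.1 + v.1, q2 - v.2 + v.2) := rfl
        rw [e]
        simp
  -- assemble everything
  refine ⟨C, fun x y => by show y + (1 + x * (p : ZMod (p ^ (2 * s))) ^ s) = _; ring,
    ?_, ?_, E, fun x s' y t => rfl, ?_, ?_, ?_, ?_, ?_⟩
  · -- C indecomposable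
    intro x y
    refine ⟨Equiv.addRight (y - x), haddC _, ?_⟩
    show x + (y - x) = y
    ring
  · -- C MPL 2
    constructor
    · intro a b z w
      show S11.Cm p s (S11.Cm p s a z) w = S11.Cm p s (S11.Cm p s b z) w
      simp only [S11.Cm]
      linear_combination (a - b) * hP2
    · intro m hm
      interval_cases m
      · refine ⟨0, 1, fun h => ?_⟩
        exact zero_ne_one (h : (0 : ZMod (p ^ (2 * s))) = 1)
      · refine ⟨0, 1, fun h => hPne ?_⟩
        have h0 : S11.Cm p s (0 : ZMod (p ^ (2 * s))) 0 = S11.Cm p s 1 0 := h 0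
        simp only [S11.Cm] at h0
        linear_combination -h0
  · -- E indecomposable
    intro a b
    refine ⟨Equiv.addRight (b - a), haddE _, ?_⟩
    show a + (b - a) = b
    ring
  · -- block system
    refine ⟨{A | ∃ g ∈ E.G, A = (⇑g) '' {q : ZMod (p ^ (2 * s)) × ZMod (p ^ (2 * s)) | q.2 = 0}},
      ⟨{q | q.2 = 0}, ⟨(0, 0), rfl⟩, ?_, rfl⟩, ?_⟩
    · intro g hg
      rw [hrange] at hg
      obtain ⟨v, rfl⟩ := hg
      have e : T v = Equiv.addRight (Multiplicative.toAdd v) := rfl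
      rw [e, himg]
      by_cases hv2 : (Multiplicative.toAdd v).2 = 0
      · left
        rw [hv2]
      · right
        rw [Set.disjoint_left]
        intro q hq hq0
        exact hv2 (by rw [← hq]; exact hq0)
    · rintro A ⟨g, hg, rfl⟩ B' ⟨x, rfl⟩
      rw [hrange] at hg
      obtain ⟨v, rfl⟩ := hg
      have e : T v = Equiv.addRight (Multiplicative.toAdd v) := rfl
      rw [e, himg]
      refine ⟨(x, (Multiplicative.toAdd v).2), ?_⟩
      ext ⟨q1, q2⟩
      simp only [Set.mem_inter_iff, Set.mem_setOf_eq, Set.mem_singleton_iff, Prod.mk.injEq]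
      tauto
  · -- E MPL 3
    constructor
    · intro a b z w v
      show S11.Em p s k (S11.Em p s k (S11.Em p s k a z) w) v
        = S11.Em p s k (S11.Em p s k (S11.Em p s k b z) w) v
      have harg : (S11.Em p s k (S11.Em p s k a z) w).1 = (S11.Em p s k (S11.Em p s k b z) w).1 := by
        show S11.Cm p s (S11.Cm p s a.1 z.1) w.1 = S11.Cm p s (S11.Cm p s b.1 z.1) w.1
        simp only [S11.Cm]
        linear_combination (a.1 - b.1) * hP2
      show (S11.Cm p s (S11.Em p s k (S11.Em p s k a z) w).1 v.1,
        v.2 + ff p s k (S11.Em p s k (S11.Em p s k a z) w).1) = _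
      rw [harg]
      rfl
    · intro m hm
      interval_cases m
      · refine ⟨((0 : ZMod (p ^ (2 * s))), (0 : ZMod (p ^ (2 * s)))), (1, 0), fun h => ?_⟩
        exact zero_ne_one (congrArg Prod.fst
          (h : (((0 : ZMod (p ^ (2 * s))), (0 : ZMod (p ^ (2 * s)))) :
            ZMod (p ^ (2 * s)) × ZMod (p ^ (2 * s))) = (1, 0)))
      · refine ⟨((0 : ZMod (p ^ (2 * s))), (0 : ZMod (p ^ (2 * s)))), (1, 0), fun h => hPne ?_⟩
        have h0 : S11.Cm p s (0 : ZMod (p ^ (2 * s))) 0 = S11.Cm p s 1 0 :=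
          congrArg Prod.fst (h (0, 0))
        simp only [S11.Cm] at h0
        linear_combination -h0
      · refine ⟨((0 : ZMod (p ^ (2 * s))), (0 : ZMod (p ^ (2 * s)))), (1, 0), fun h => ?_⟩
        have h2' : (0 : ZMod (p ^ (2 * s))) + ff p s k (S11.Cm p s (0 : ZMod (p ^ (2 * s))) 0)
            = 0 + ff p s k (S11.Cm p s 1 0) := congrArg Prod.snd (h (0, 0) (0, 0))
        rw [show S11.Cm p s (0 : ZMod (p ^ (2 * s))) 0 = 0 + 1 from by simp only [S11.Cm]; ring,
            show S11.Cm p s (1 : ZMod (p ^ (2 * s))) 0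
              = (0 + 1) + 1 * (p : ZMod (p ^ (2 * s))) ^ s from by simp only [S11.Cm]; ring,
            ff_add] at h2'
        exact hkQ (by linear_combination -h2')
  · -- retraction
    refine ⟨fun a => a.1, fun x => ⟨(x, 0), rfl⟩, ?_, fun a b => rfl⟩
    intro a b
    constructor
    · intro h z
      have h' : a.1 = b.1 := h
      show S11.Em p s k a z = S11.Em p s k b z
      simp only [S11.Em, h']
    · intro h
      have h0 := h ((0 : ZMod (p ^ (2 * s))), (0 : ZMod (p ^ (2 * s))))
      have h1 : S11.Cm p s a.1 0 = S11.Cm p s b.1 0 := congrArg Prod.fst h0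
      have h2' : (0 : ZMod (p ^ (2 * s))) + ff p s k a.1 = 0 + ff p s k b.1 :=
        congrArg Prod.snd h0
      simp only [S11.Cm] at h1
      rw [zero_add, zero_add] at h2'
      exact hkey a.1 b.1 (by linear_combination h1) h2'
  · -- group isomorphism
    exact ⟨(MulEquiv.subgroupCongr hrange).trans (MonoidHom.ofInjective hTinj).symm⟩
end
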